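/- The set S = {(h,Q,D,B) ∈ ℝ × ℝ³ × ℝ³ × ℝ³ : h ≥ √(1 + |D|² + |B|² + |Q|² + 2|D × B − Q|)} is a convex subset of ℝ^{10}. -/

import Mathlib

open Real

/-- The cross product on `ℝ³` with the Euclidean norm. -/
noncomputable def cross3 (a b : EuclideanSpace ℝ (Fin 3)) : EuclideanSpace ℝ (Fin 3) :=
  (WithLp.equiv 2 (Fin 3 → ℝ)).symm
    (crossProduct ((WithLp.equiv 2 (Fin 3 → ℝ)) a) ((WithLp.equiv 2 (Fin 3 → ℝ)) b))

/-!
For a unit vector `ξ` one has the identity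
`|D + B × ξ|² + ⟨ξ, B⟩² + |Q - ξ|² = 1 + |D|² + |B|² + |Q|² + 2⟨ξ, D × B - Q⟩`,
and the right-hand side is maximised over the unit sphere at `ξ = (D × B - Q)/|D × B - Q|`.
Hence `√(1 + |D|² + |B|² + |Q|² + 2|D × B - Q|)` is the pointwise maximum over `ξ` of the
Euclidean norms of the vectors `(D + B × ξ, ⟨ξ, B⟩, Q - ξ)`, which depend affinely on `(Q, D, B)`.
A maximum of convex functions is convex, and the set in question is its epigraph.
-/

open Set

section Convex

variable {E : Type*} [AddCommGroup E] [Module ℝ E] {s : Set E}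

theorem ConvexOn.of_forall_le_of_exists_eq {ι : Type*} {φ : ι → E → ℝ} {F : E → ℝ}
    (hs : Convex ℝ s) (hφ : ∀ i, ConvexOn ℝ s (φ i)) (hle : ∀ i, ∀ x ∈ s, φ i x ≤ F x)
    (heq : ∀ x ∈ s, ∃ i, φ i x = F x) : ConvexOn ℝ s F := by
  refine ⟨hs, fun x hx y hy a b ha hb hab => ?_⟩
  obtain ⟨i, hi⟩ := heq _ (hs hx hy ha hb hab)
  calc F (a • x + b • y) = φ i (a • x + b • y) := hi.symm
    _ ≤ a • φ i x + b • φ i y := (hφ i).2 hx hy ha hb hab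
    _ ≤ a • F x + b • F y := by gcongr <;> exact hle i _ ‹_›

theorem ConvexOn.sqrt_sq_add_sq {f g : E → ℝ} (hf : ConvexOn ℝ s f) (hg : ConvexOn ℝ s g)
    (hf₀ : ∀ x ∈ s, 0 ≤ f x) (hg₀ : ∀ x ∈ s, 0 ≤ g x) :
    ConvexOn ℝ s fun x => √(f x ^ 2 + g x ^ 2) := by
  refine ⟨hf.1, fun x hx y hy a b ha hb hab => ?_⟩
  have hxy := hf.1 hx hy ha hb hab
  simp only [smul_eq_mul, ← Complex.norm_add_mul_I]
  -- Minkowski's inequality in `ℝ²`, realised as the triangle inequality in `ℂ`.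
  calc ‖(f (a • x + b • y) : ℂ) + g (a • x + b • y) * Complex.I‖
      ≤ ‖((a * f x + b * f y : ℝ) : ℂ) + (a * g x + b * g y : ℝ) * Complex.I‖ := by
        rw [Complex.norm_add_mul_I, Complex.norm_add_mul_I]
        gcongr
        · exact hf₀ _ hxy
        · exact hf.2 hx hy ha hb hab
        · exact hg₀ _ hxy
        · exact hg.2 hx hy ha hb hab
    _ = ‖a • ((f x : ℂ) + g x * Complex.I) + b • ((f y : ℂ) + g y * Complex.I)‖ := by
        congr 1; simp only [Complex.real_smul]; push_cast; ring
    _ ≤ a * ‖(f x : ℂ) + g x * Complex.I‖ + b * ‖(f y : ℂ) + g y * Complex.I‖ := by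
        refine (norm_add_le _ _).trans ?_
        rw [norm_smul, norm_smul, Real.norm_of_nonneg ha, Real.norm_of_nonneg hb]

theorem ConvexOn.convex_setOf_apply_snd_le_fst {f : E → ℝ} (hf : ConvexOn ℝ univ f) :
    Convex ℝ {p : ℝ × E | f p.2 ≤ p.1} := by
  rintro ⟨h₁, x⟩ hx ⟨h₂, y⟩ hy a b ha hb hab
  calc f (a • x + b • y) ≤ a • f x + b • f y := hf.2 trivial trivial ha hb hab
    _ ≤ a • h₁ + b • h₂ := by gcongr <;> assumption

end Convex

theorem exists_norm_eq_one_inner_eq_norm {F : Type*} [NormedAddCommGroup F]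
    [InnerProductSpace ℝ F] [Nontrivial F] (w : F) :
    ∃ ξ : F, ‖ξ‖ = 1 ∧ inner ℝ ξ w = ‖w‖ := by
  rcases eq_or_ne w 0 with rfl | hw
  · obtain ⟨ξ, hξ⟩ := exists_norm_eq F zero_le_one
    exact ⟨ξ, hξ, by simp⟩
  · refine ⟨‖w‖⁻¹ • w, norm_smul_inv_norm hw, ?_⟩
    rw [real_inner_smul_left, real_inner_self_eq_norm_sq]
    field_simp

local notation "ℝ³" => EuclideanSpace ℝ (Fin 3)

theorem norm_add_cross3_sq_add_inner_sq_add_norm_sub_sq (Q D B ξ : ℝ³) :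
    ‖D + cross3 B ξ‖ ^ 2 + inner ℝ ξ B ^ 2 + ‖Q - ξ‖ ^ 2
      = ‖D‖ ^ 2 + (‖B‖ ^ 2 + 1) * ‖ξ‖ ^ 2 + ‖Q‖ ^ 2 + 2 * inner ℝ ξ (cross3 D B - Q) := by
  simp only [cross3, WithLp.equiv_apply, WithLp.equiv_symm_apply, cross_apply,
    EuclideanSpace.norm_sq_eq, PiLp.add_apply, PiLp.sub_apply, PiLp.inner_apply,
    RCLike.inner_apply, conj_trivial, norm_eq_abs, sq_abs, Fin.sum_univ_three,
    Matrix.cons_val_zero, Matrix.cons_val_one, Matrix.cons_val]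
  ring

noncomputable def cross3Right (ξ : ℝ³) : ℝ³ →ₗ[ℝ] ℝ³ :=
  (WithLp.linearEquiv 2 ℝ (Fin 3 → ℝ)).symm.toLinearMap ∘ₗ crossProduct.flip (WithLp.ofLp ξ)
    ∘ₗ (WithLp.linearEquiv 2 ℝ (Fin 3 → ℝ)).toLinearMap

namespace BornInfeld

noncomputable def radicand (x : ℝ³ × ℝ³ × ℝ³) : ℝ :=
  1 + ‖x.2.1‖ ^ 2 + ‖x.2.2‖ ^ 2 + ‖x.1‖ ^ 2 + 2 * ‖cross3 x.2.1 x.2.2 - x.1‖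

noncomputable def minorant (ξ : ℝ³) (x : ℝ³ × ℝ³ × ℝ³) : ℝ :=
  √(‖x.2.1 + cross3 x.2.2 ξ‖ ^ 2 + inner ℝ ξ x.2.2 ^ 2 + ‖x.1 - ξ‖ ^ 2)

theorem minorant_eq {ξ : ℝ³} (hξ : ‖ξ‖ = 1) (x : ℝ³ × ℝ³ × ℝ³) :
    minorant ξ x = √(1 + ‖x.2.1‖ ^ 2 + ‖x.2.2‖ ^ 2 + ‖x.1‖ ^ 2
      + 2 * inner ℝ ξ (cross3 x.2.1 x.2.2 - x.1)) := by
  rw [minorant, norm_add_cross3_sq_add_inner_sq_add_norm_sub_sq, hξ]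
  ring_nf

theorem minorant_le {ξ : ℝ³} (hξ : ‖ξ‖ = 1) (x : ℝ³ × ℝ³ × ℝ³) :
    minorant ξ x ≤ √(radicand x) := by
  rw [minorant_eq hξ, radicand]
  have := real_inner_le_norm ξ (cross3 x.2.1 x.2.2 - x.1)
  rw [hξ, one_mul] at this
  gcongr

theorem exists_minorant_eq (x : ℝ³ × ℝ³ × ℝ³) :
    ∃ ξ : ℝ³, ‖ξ‖ = 1 ∧ minorant ξ x = √(radicand x) := by
  obtain ⟨ξ, hξ, hinner⟩ := exists_norm_eq_one_inner_eq_norm (cross3 x.2.1 x.2.2 - x.1)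
  exact ⟨ξ, hξ, by rw [minorant_eq hξ, hinner, radicand]⟩

theorem convexOn_minorant (ξ : ℝ³) : ConvexOn ℝ univ (minorant ξ) := by
  let snd₂ := LinearMap.snd ℝ ℝ³ ℝ³ ∘ₗ LinearMap.snd ℝ ℝ³ (ℝ³ × ℝ³)
  have hD : ConvexOn ℝ univ fun x : ℝ³ × ℝ³ × ℝ³ => ‖x.2.1 + cross3 x.2.2 ξ‖ :=
    convexOn_univ_norm.comp_linearMap
      (LinearMap.fst ℝ ℝ³ ℝ³ ∘ₗ LinearMap.snd ℝ ℝ³ (ℝ³ × ℝ³) + cross3Right ξ ∘ₗ snd₂)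
  have hB : ConvexOn ℝ univ fun x : ℝ³ × ℝ³ × ℝ³ => |inner ℝ ξ x.2.2| :=
    convexOn_univ_norm.comp_linearMap (innerₛₗ ℝ ξ ∘ₗ snd₂)
  have hQ : ConvexOn ℝ univ fun x : ℝ³ × ℝ³ × ℝ³ => ‖x.1 - ξ‖ :=
    (convexOn_univ_dist ξ).comp_linearMap (LinearMap.fst ℝ ℝ³ (ℝ³ × ℝ³))
  have hDB := hD.sqrt_sq_add_sq hB (fun _ _ => norm_nonneg _) (fun _ _ => abs_nonneg _)
  have hsplit : minorant ξ = fun x =>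
      √(√(‖x.2.1 + cross3 x.2.2 ξ‖ ^ 2 + |inner ℝ ξ x.2.2| ^ 2) ^ 2 + ‖x.1 - ξ‖ ^ 2) := by
    ext x
    rw [minorant, sq_sqrt (by positivity), sq_abs]
  rw [hsplit]
  exact hDB.sqrt_sq_add_sq hQ (fun _ _ => sqrt_nonneg _) (fun _ _ => norm_nonneg _)

theorem convexOn_sqrt_radicand : ConvexOn ℝ univ fun x => √(radicand x) :=
  ConvexOn.of_forall_le_of_exists_eq (φ := fun ξ : Metric.sphere (0 : ℝ³) 1 => minorant ξ)
    convex_univ (fun ξ => convexOn_minorant ξ)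
    (fun ξ x _ => minorant_le (mem_sphere_zero_iff_norm.mp ξ.2) x)
    (fun x _ => by
      obtain ⟨ξ, hξ, heq⟩ := exists_minorant_eq x
      exact ⟨⟨ξ, mem_sphere_zero_iff_norm.mpr hξ⟩, heq⟩)

end BornInfeld

/-- Serre's description of the convex hull of the Born–Infeld manifold: the set
`{(h,Q,D,B) : h ≥ √(1 + |D|² + |B|² + |Q|² + 2|D × B - Q|)}` is convex in `ℝ¹⁰`. -/
theorem convexified_BI_manifold_convex :
    Convex ℝ
      {p : ℝ × EuclideanSpace ℝ (Fin 3) × EuclideanSpace ℝ (Fin 3) ×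
          EuclideanSpace ℝ (Fin 3) |
          Real.sqrt (1 + ‖p.2.2.1‖ ^ 2 + ‖p.2.2.2‖ ^ 2 + ‖p.2.1‖ ^ 2 +
            2 * ‖cross3 p.2.2.1 p.2.2.2 - p.2.1‖) ≤ p.1} :=
  BornInfeld.convexOn_sqrt_radicand.convex_setOf_apply_snd_le_fst
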